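/- arXiv:1004.5208 — 3 statements merged into one kernel-verified Lean document; each statement's English description precedes it below -/
import Mathlib

section
/- The number of heap-ordered forests with n vertices equals n!. -/
/-!
Since labels decrease along every path toward a root, a heap-ordered forest is the same thing as
a choice, for each vertex `i`, of a parent among the `i` smaller labels or of no parent at all;
the acyclicity of such a parent map is automatic. Hence there are `∏ i < n, (i + 1) = n!` of them.
-/

open scoped Classical

/-- An ordered rooted forest on vertex set `Fin n`: each vertex has at most one
parent, and the parent relation is acyclic.  The labels `0,…,n-1` of `Fin n`
play the role of the labels `1,…,n`. -/
structure OForest (n : ℕ) where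
  parent : Fin n → Option (Fin n)
  acyclic : ∀ i, ¬ Relation.TransGen (fun a b => parent a = some b) i i

namespace OForest

/-- `F.desc i j` : there is an oriented path (toward the roots) from `i` to `j`,
i.e. `i` lies strictly above `j`. -/
def desc {n : ℕ} (F : OForest n) : Fin n → Fin n → Prop :=
  Relation.TransGen (fun a b => F.parent a = some b)

/-- A forest is heap-ordered when `i ↠ j` implies `i > j`. -/
def HeapOrdered {n : ℕ} (F : OForest n) : Prop :=
  ∀ i j, F.desc i j → j < i

/-- A tree is a connected forest, i.e. it has exactly one root. -/
def IsTree {n : ℕ} (F : OForest n) : Prop :=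
  ∃! r : Fin n, F.parent r = none

end OForest

/-- The set of forest-order-preserving symmetries of an ordered forest. -/
def SF {n : ℕ} (F : OForest n) : Set (Equiv.Perm (Fin n)) :=
  {σ | ∀ i j, F.desc i j → σ⁻¹ j < σ⁻¹ i}

theorem Relation.TransGen.lt_of_forall_lt {α : Type*} [Preorder α] {r : α → α → Prop}
    (h : ∀ a b, r a b → b < a) {a b : α} (hab : Relation.TransGen r a b) : b < a := by
  induction hab with
  | single hrel => exact h _ _ hrel
  | tail _ hrel ih => exact (h _ _ hrel).trans ih

def Equiv.optionSubtypeForallSome {α : Type*} (p : α → Prop) :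
    {o : Option α // ∀ a, o = some a → p a} ≃ Option {a // p a} where
  toFun o := o.1.pmap Subtype.mk o.2
  invFun o := ⟨o.map Subtype.val, by
    rintro a ha
    obtain ⟨b, -, rfl⟩ := Option.map_eq_some_iff.1 ha
    exact b.2⟩
  left_inv := by rintro ⟨_ | _, _⟩ <;> rfl
  right_inv := by rintro (_ | _) <;> rfl

namespace OForest

variable {n : ℕ}

theorem heapOrdered_iff_parent_lt (F : OForest n) :
    F.HeapOrdered ↔ ∀ i j, F.parent i = some j → j < i :=
  ⟨fun h i j hij => h i j (.single hij), fun h _ _ => Relation.TransGen.lt_of_forall_lt h⟩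

def ofParentLT (p : Fin n → Option (Fin n)) (hp : ∀ i j, p i = some j → j < i) : OForest n where
  parent := p
  acyclic i hi := lt_irrefl i (Relation.TransGen.lt_of_forall_lt hp hi)

def heapOrderedEquivParentLT :
    {F : OForest n // F.HeapOrdered} ≃
      {p : Fin n → Option (Fin n) // ∀ i j, p i = some j → j < i} where
  toFun F := ⟨F.1.parent, (heapOrdered_iff_parent_lt F.1).1 F.2⟩
  invFun p := ⟨ofParentLT p.1 p.2, (heapOrdered_iff_parent_lt _).2 p.2⟩
  left_inv _ := rfl
  right_inv _ := rfl

theorem card_parent_lt (i : Fin n) :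
    Nat.card {o : Option (Fin n) // ∀ j, o = some j → j < i} = i + 1 := by
  rw [Nat.card_congr (Equiv.optionSubtypeForallSome _), Nat.card_eq_fintype_card,
    Fintype.card_option]
  exact congrArg (· + 1) (Fintype.card_fin_lt_of_le i.is_le')

end OForest

/-- The number of heap-ordered forests with `n` vertices equals `n!`. -/
theorem statement1 (n : ℕ) :
    Nat.card {F : OForest n // F.HeapOrdered} = n.factorial := by
  calc Nat.card {F : OForest n // F.HeapOrdered}
      = Nat.card (∀ i : Fin n, {o : Option (Fin n) // ∀ j, o = some j → j < i}) :=
        Nat.card_congr (OForest.heapOrderedEquivParentLT.trans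
          (Equiv.subtypePiEquivPi (p := fun i o => ∀ j, o = some j → j < i)))
    _ = ∏ i : Fin n, ((i : ℕ) + 1) := by simp only [Nat.card_pi, OForest.card_parent_lt]
    _ = n.factorial := by
        rw [Fin.prod_univ_eq_prod_range (· + 1)]
        exact Finset.prod_range_add_one_eq_factorial n
end

section
/- For any permutation σ of {1,...,n}, there exists a heap-ordered forest F with n vertices such that σ is the maximum, in lexicographic order on words (σ(1)...σ(n)), of the set S_F of forest-order-preserving symmetries of F. -/
/-!
Make each value `i` a child of the nearest value to its left in the word `σ 0 … σ (n-1)` that is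
smaller than `i` (a root if there is none). Parents are smaller and stand further left, so the
forest is heap-ordered and contains `σ` in `S_F`. Let `τ ∈ S_F` first differ from `σ` at position
`k`, and suppose `σ k < τ k = v`. In `σ` the value `σ k` is smaller than `v` and to its left, so `v`
has a parent `p` placed by `σ` at a position `≥ k`. But `τ` must place `p` before `v`, i.e. before
position `k`, where `τ` and `σ` agree: a contradiction.
-/

open scoped Classical

def LexLT {n : ℕ} (σ τ : Equiv.Perm (Fin n)) : Prop :=
  ∃ i : Fin n, (∀ j, j < i → σ j = τ j) ∧ σ i < τ i

theorem Relation.TransGen.lt_of_step_lt {α β : Type*} [Preorder β] {r : α → α → Prop}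
    {f : α → β} (h : ∀ a b, r a b → f b < f a) {a b : α} (hab : Relation.TransGen r a b) :
    f b < f a := by
  induction hab with
  | single hr => exact h _ _ hr
  | tail _ hr ih => exact (h _ _ hr).trans ih

theorem lexLT_iff_toLex_lt {n : ℕ} {σ τ : Equiv.Perm (Fin n)} :
    LexLT σ τ ↔ toLex ⇑σ < toLex ⇑τ :=
  Iff.rfl

theorem Equiv.Perm.inv_apply_eq_of_eqOn {α : Type*} {σ τ : Equiv.Perm α} {s : Set α} {x : α}
    (h : Set.EqOn σ τ s) (hx : σ⁻¹ x ∈ s) : τ⁻¹ x = σ⁻¹ x := by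
  rw [Equiv.Perm.inv_eq_iff_eq, ← h hx]
  exact (σ.apply_symm_apply x).symm

namespace Equiv.Perm

variable {n : ℕ} (σ : Equiv.Perm (Fin n))

def smallerBefore (i : Fin n) : Finset (Fin n) :=
  {j | j < σ⁻¹ i ∧ σ j < i}

noncomputable def nearestSmallerLeft (i : Fin n) : Option (Fin n) :=
  if h : (σ.smallerBefore i).Nonempty then some (σ ((σ.smallerBefore i).max' h)) else none

variable {σ}

theorem mem_smallerBefore {i j : Fin n} : j ∈ σ.smallerBefore i ↔ j < σ⁻¹ i ∧ σ j < i := by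
  simp only [smallerBefore, Finset.mem_filter, Finset.mem_univ, true_and]

theorem lt_and_inv_lt_of_nearestSmallerLeft_eq_some {i p : Fin n}
    (h : σ.nearestSmallerLeft i = some p) : p < i ∧ σ⁻¹ p < σ⁻¹ i := by
  unfold nearestSmallerLeft at h
  split_ifs at h with hne
  obtain rfl := Option.some.inj h
  obtain ⟨hpos, hval⟩ := mem_smallerBefore.1 (Finset.max'_mem _ hne)
  exact ⟨hval, by simpa using hpos⟩

theorem exists_nearestSmallerLeft_eq_some {i j : Fin n} (hj : j < σ⁻¹ i) (hσj : σ j < i) :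
    ∃ p, σ.nearestSmallerLeft i = some p ∧ j ≤ σ⁻¹ p := by
  have hmem : j ∈ σ.smallerBefore i := mem_smallerBefore.2 ⟨hj, hσj⟩
  refine ⟨_, dif_pos ⟨j, hmem⟩, ?_⟩
  simpa using Finset.le_max' _ j hmem

variable (σ)

noncomputable def nearestSmallerForest : OForest n where
  parent := σ.nearestSmallerLeft
  acyclic i hi := lt_irrefl i <| hi.lt_of_step_lt (f := id) fun _ _ h =>
    (lt_and_inv_lt_of_nearestSmallerLeft_eq_some h).1

theorem nearestSmallerForest_heapOrdered : σ.nearestSmallerForest.HeapOrdered :=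
  fun _ _ h => h.lt_of_step_lt (f := id) fun _ _ h =>
    (lt_and_inv_lt_of_nearestSmallerLeft_eq_some h).1

theorem mem_SF_nearestSmallerForest : σ ∈ SF σ.nearestSmallerForest :=
  fun _ _ h => h.lt_of_step_lt (f := (σ⁻¹ ·)) fun _ _ h =>
    (lt_and_inv_lt_of_nearestSmallerLeft_eq_some h).2

theorem not_lexLT_of_mem_SF_nearestSmallerForest {τ : Equiv.Perm (Fin n)}
    (hτ : τ ∈ SF σ.nearestSmallerForest) : ¬ LexLT σ τ := by
  rintro ⟨k, hagree, hlt⟩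
  have hτk : τ⁻¹ (τ k) = k := τ.symm_apply_apply k
  have hk : k < σ⁻¹ (τ k) := by
    refine lt_of_le_of_ne (not_lt.1 fun h => ?_) fun h => hlt.ne (eq_inv_iff_eq.1 h)
    have h' := inv_apply_eq_of_eqOn hagree h
    rw [hτk] at h'
    exact h.ne' h'
  obtain ⟨p, hp, hkp⟩ := exists_nearestSmallerLeft_eq_some hk (by simpa using hlt)
  have hτp : τ⁻¹ p < k := hτk ▸ hτ _ _ (.single hp)
  have hσp : σ⁻¹ p = τ⁻¹ p := inv_apply_eq_of_eqOn (Set.EqOn.symm (s := Set.Iio k) hagree) hτp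
  exact (hkp.trans_lt (hσp.trans_lt hτp)).false

end Equiv.Perm

/-- For any permutation `σ` of `{1,…,n}` there is a heap-ordered forest `F`
with `n` vertices such that `σ` is the greatest element of `S_F` in
lexicographic order. -/
theorem statement5 (n : ℕ) (σ : Equiv.Perm (Fin n)) :
    ∃ F : OForest n, F.HeapOrdered ∧ σ ∈ SF F ∧
      ∀ τ ∈ SF F, τ = σ ∨ LexLT τ σ := by
  refine ⟨σ.nearestSmallerForest, σ.nearestSmallerForest_heapOrdered,
    σ.mem_SF_nearestSmallerForest, fun τ hτ => ?_⟩
  rcases lt_trichotomy (toLex ⇑τ) (toLex ⇑σ) with h | h | h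
  · exact .inr (lexLT_iff_toLex_lt.2 h)
  · exact .inl (DFunLike.coe_injective h)
  · exact absurd (lexLT_iff_toLex_lt.2 h) (σ.not_lexLT_of_mem_SF_nearestSmallerForest hτ)
end

section
/- The restriction of Θ to the span of heap-ordered forests with n vertices is a linear isomorphism onto the span of Σ_n; equivalently, the n! × n! matrix whose (F, σ) entry is the indicator of σ ∈ S_F (F ranging over heap-ordered forests with n vertices) is invertible. -/
open scoped Classical

/-- A `(k,l)`-shuffle: a permutation of `Fin (k+l)` whose inverse is increasing
on the first `k` letters and on the last `l` letters. -/
def IsShuffle (k l : ℕ) (ε : Equiv.Perm (Fin (k + l))) : Prop :=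
  (∀ i j : Fin (k + l), i < j → (j : ℕ) < k → ε⁻¹ i < ε⁻¹ j) ∧
  (∀ i j : Fin (k + l), i < j → k ≤ (i : ℕ) → ε⁻¹ i < ε⁻¹ j)

/-- The block sum `σ ⊗ τ` of permutations, acting as `σ` on the first `k`
letters and as the shift of `τ` on the last `l` letters. -/
def blockSum {k l : ℕ} (σ : Equiv.Perm (Fin k)) (τ : Equiv.Perm (Fin l)) :
    Equiv.Perm (Fin (k + l)) :=
  finSumFinEquiv.permCongr (Equiv.sumCongr σ τ)


/-- The map `Θ` on an ordered forest: the formal sum of the forest-order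
preserving symmetries of `F`, as an element of the degree-`n` component of
`FQSym` (the free module on `Σ_n`). -/
noncomputable def ThetaF {n : ℕ} (F : OForest n) : Equiv.Perm (Fin n) →₀ ℚ :=
  ∑ σ ∈ Finset.univ.filter (fun σ => σ ∈ SF F), Finsupp.single σ 1

/-- The product of `FQSym` on homogeneous components, extending bilinearly
`σ · τ = Σ_{ε ∈ Sh(k,l)} (σ ⊗ τ) ∘ ε`. -/
noncomputable def fqMul {k l : ℕ} (x : Equiv.Perm (Fin k) →₀ ℚ)
    (y : Equiv.Perm (Fin l) →₀ ℚ) : Equiv.Perm (Fin (k + l)) →₀ ℚ :=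
  x.sum fun σ a => y.sum fun τ b =>
    (a * b) • ∑ ε ∈ Finset.univ.filter (fun ε => IsShuffle k l ε),
      Finsupp.single (blockSum σ τ * ε) 1

/-! Read a permutation `σ` of `Fin n` as a word and attach each letter `v` to the letter at
the rightmost position left of `v` that carries a smaller letter. This gives a heap-ordered
forest `σ.forest` of which `σ` is a linear extension, and in fact the lexicographically largest
one. Hence `σ ↦ σ.forest` is injective, so a bijection onto the `n!` heap-ordered forests, and
the vectors `Θ(σ.forest)` are unitriangular in the standard basis of permutations ordered
lexicographically. -/

open Equiv Finset Module
open scoped Nat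

theorem Relation.TransGen.map_lt {α β : Type*} [Preorder β] {r : α → α → Prop}
    (f : α → β) (h : ∀ a b, r a b → f b < f a) {a b : α} (hab : Relation.TransGen r a b) :
    f b < f a := by
  induction hab with
  | single hr => exact h _ _ hr
  | tail _ hr ih => exact (h _ _ hr).trans ih

theorem Finsupp.linearIndependent_and_span_eq_top_of_triangular
    {ι R : Type*} [Fintype ι] [LinearOrder ι] [CommRing R] (v : ι → ι →₀ R)
    (hdiag : ∀ i, IsUnit (v i i)) (htri : ∀ i j, j < i → v j i = 0) :
    LinearIndependent R v ∧ Submodule.span R (Set.range v) = ⊤ := by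
  rw [Basis.is_basis_iff_det Finsupp.basisSingleOne, Basis.det_apply,
    Matrix.det_of_isUpperTriangular]
  · simpa [Basis.toMatrix_apply] using IsUnit.prod_univ_iff.mpr hdiag
  · intro i j hji
    simpa [Basis.toMatrix_apply] using htri i j hji

namespace OForest

variable {n : ℕ}

theorem parent_injective : Function.Injective (parent : OForest n → _) := by
  rintro ⟨p, _⟩ ⟨q, _⟩ rfl
  rfl

noncomputable def heapOrderedEquiv :
    {F : OForest n // F.HeapOrdered} ≃ ((i : Fin n) → Option (Fin i)) where
  toFun F i := (F.1.parent i).pmap (fun (j : Fin n) (hj : j < i) => ⟨j, hj⟩)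
    fun j hj => F.2 i j (Relation.TransGen.single hj)
  invFun g :=
    have parent_lt : ∀ a b, (g a).map (Fin.castLE a.isLt.le) = some b → b < a := by
      intro a b hab
      obtain ⟨j, -, rfl⟩ := Option.map_eq_some_iff.mp hab
      exact j.isLt
    ⟨⟨fun i => (g i).map (Fin.castLE i.isLt.le),
      fun i hi => lt_irrefl i (hi.map_lt id parent_lt)⟩,
      fun _ _ hij => hij.map_lt id parent_lt⟩
  left_inv F := by
    refine Subtype.ext (parent_injective (funext fun i => ?_))
    cases h : F.1.parent i <;> simp [h]
  right_inv g := by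
    funext i
    cases h : g i <;> simp [h]

instance : Finite {F : OForest n // F.HeapOrdered} :=
  .of_equiv _ heapOrderedEquiv.symm

theorem card_heapOrdered : Nat.card {F : OForest n // F.HeapOrdered} = n ! := by
  rw [Nat.card_congr heapOrderedEquiv, Nat.card_pi]
  simp only [Nat.card_eq_fintype_card, Fintype.card_option, Fintype.card_fin]
  rw [Fin.prod_univ_eq_prod_range (· + 1), prod_range_add_one_eq_factorial]

end OForest

namespace Equiv.Perm

variable {n : ℕ}

def leftSmaller (σ : Perm (Fin n)) (v : Fin n) : Finset (Fin n) :=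
  {q | q < σ⁻¹ v ∧ σ q < v}

noncomputable def forestParent (σ : Perm (Fin n)) (v : Fin n) : Option (Fin n) :=
  if h : (σ.leftSmaller v).Nonempty then some (σ ((σ.leftSmaller v).max' h)) else none

theorem forestParent_eq_some {σ : Perm (Fin n)} {v u : Fin n} (h : σ.forestParent v = some u) :
    u < v ∧ σ⁻¹ u < σ⁻¹ v := by
  unfold forestParent at h
  split_ifs at h with hne
  cases Option.some_injective _ h
  obtain ⟨hpos, hval⟩ := (mem_filter.mp ((σ.leftSmaller v).max'_mem hne)).2
  exact ⟨hval, by simpa using hpos⟩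

noncomputable def forest (σ : Perm (Fin n)) : OForest n where
  parent := σ.forestParent
  acyclic i hi := lt_irrefl i (hi.map_lt id fun _ _ h => (forestParent_eq_some h).1)

theorem forest_heapOrdered (σ : Perm (Fin n)) : σ.forest.HeapOrdered :=
  fun _ _ h => h.map_lt id fun _ _ h => (forestParent_eq_some h).1

theorem mem_SF_forest (σ : Perm (Fin n)) : σ ∈ SF σ.forest :=
  fun _ _ h => h.map_lt (⇑σ⁻¹) fun _ _ h => (forestParent_eq_some h).2

theorem toLex_le_of_mem_SF_forest {σ τ : Perm (Fin n)} (hτ : τ ∈ SF σ.forest) :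
    toLex ⇑τ ≤ toLex ⇑σ := by
  -- If `τ` first exceeds `σ` at position `p`, with letter `u`, then `σ` puts the parent of `u`
  -- at a position `≥ p`, while `τ` must put it before `p`, where `τ` agrees with `σ`.
  by_contra! hlt
  obtain ⟨p, hagree, hσp⟩ := hlt
  replace hagree : ∀ j < p, σ j = τ j := hagree
  change σ p < τ p at hσp
  set u := τ p
  have hp : p < σ⁻¹ u := by
    refine lt_of_le_of_ne (le_of_not_gt fun h => ?_) fun h => ?_
    · have := hagree _ h
      rw [Perm.coe_inv, apply_symm_apply] at this
      exact h.ne (τ.injective this.symm)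
    · rw [h, Perm.coe_inv, apply_symm_apply] at hσp
      exact hσp.ne rfl
  have hmem : p ∈ σ.leftSmaller u := mem_filter.mpr ⟨mem_univ p, hp, hσp⟩
  set q := (σ.leftSmaller u).max' ⟨p, hmem⟩
  have hpq : p ≤ q := le_max' _ p hmem
  have hparent : σ.forestParent u = some (σ q) := dif_pos ⟨p, hmem⟩
  have hτq : τ⁻¹ (σ q) < p := by
    simpa [u] using hτ u (σ q) (Relation.TransGen.single hparent)
  have : τ⁻¹ (σ q) = q := σ.injective (by simpa using hagree _ hτq)
  exact (hτq.trans_le hpq).ne this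

theorem forest_injective : Function.Injective (forest : Perm (Fin n) → OForest n) := by
  intro σ τ h
  refine DFunLike.coe_injective (toLex.injective (le_antisymm ?_ ?_))
  · exact toLex_le_of_mem_SF_forest (h ▸ mem_SF_forest σ)
  · exact toLex_le_of_mem_SF_forest (h ▸ mem_SF_forest τ)

theorem bijective_forest :
    Function.Bijective fun σ : Perm (Fin n) => (⟨σ.forest, σ.forest_heapOrdered⟩ :
      {F : OForest n // F.HeapOrdered}) := by
  refine (Nat.bijective_iff_injective_and_card _).mpr ⟨fun σ τ h => ?_, ?_⟩
  · exact forest_injective (congrArg Subtype.val h)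
  · rw [Nat.card_perm, OForest.card_heapOrdered, Nat.card_fin]

end Equiv.Perm

theorem thetaF_apply {n : ℕ} (F : OForest n) (σ : Perm (Fin n)) :
    ThetaF F σ = if σ ∈ SF F then 1 else 0 := by
  simp [ThetaF, Finsupp.finsetSum_apply, Finsupp.single_apply]

/-- The family `(Θ(F))`, `F` ranging over heap-ordered forests with `n`
vertices, is linearly independent and spans the span of `Σ_n`: the restriction
of `Θ` to heap-ordered forests is a linear isomorphism onto the degree-`n`
component of `FQSym`. -/
theorem statement17 (n : ℕ) :
    LinearIndependent ℚ
      (fun F : {F : OForest n // F.HeapOrdered} => ThetaF F.1) ∧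
    Submodule.span ℚ
      (Set.range fun F : {F : OForest n // F.HeapOrdered} => ThetaF F.1) = ⊤ := by
  let _ : LinearOrder (Perm (Fin n)) :=
    LinearOrder.lift' (fun σ => toLex ⇑σ) (toLex.injective.comp DFunLike.coe_injective)
  have hbasis := Finsupp.linearIndependent_and_span_eq_top_of_triangular
    (fun σ : Perm (Fin n) => ThetaF σ.forest)
    (fun σ => by simp [thetaF_apply, Perm.mem_SF_forest])
    (fun σ τ hlt => by
      rw [thetaF_apply, if_neg fun h => (Perm.toLex_le_of_mem_SF_forest h).not_gt hlt])
  let e := Equiv.ofBijective _ (Perm.bijective_forest (n := n))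
  rw [← linearIndependent_equiv e, ← EquivLike.range_comp _ e]
  exact hbasis
end
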